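/- arXiv:1610.05672 — 2 statements merged into one kernel-verified Lean document; each statement's English description precedes it below -/
import Mathlib

section
/- Fix i ≥ 2. Let w₀, v₁, …, v_i be i.i.d. positive real-valued random variables, let u₁, …, u_i be arbitrary random variables with values in [0,1], and define the forward-coupled Metropolis weight chains W and W̃ from them. Then P(W_i = W̃_{i−1}) ≥ 1 − 2/(i+1); that is, the forward-coupled chains have coupled by step i with probability at least 1 − 2/(i+1). -/
open MeasureTheory

/-!
A proposal `v j` with `j ≥ 2` that is at least all of `v 0, …, v (j - 1)` is accepted by both
chains, since each chain's current weight is one of those earlier weights; from then on the chains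
agree. So if they have not coupled by step `i`, the last maximum of `v 0, …, v i` sits at index
`0` or `1`. For i.i.d. weights a transposition of coordinates shows that the probability that the
last maximum sits at index `k` is nondecreasing in `k` (ties only favour later indices), and these
`i + 1` events are disjoint, so the first two have total probability at most `2 / (i + 1)`.
-/

/-- The Metropolis weight update: from current weight `w`, proposed weight `w'`, and
uniform draw `u`, accept the proposal iff `u ≤ min 1 (w'/w)`. -/
noncomputable def metroF (w w' u : ℝ) : ℝ := if u ≤ min 1 (w' / w) then w' else w

/-- The forward Metropolis weight chain: `W 0 = w0`, `W (i+1) = f (W i) (v (i+1)) (u (i+1))`. -/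
noncomputable def fwdChain (w0 : ℝ) (v u : ℕ → ℝ) : ℕ → ℝ
  | 0 => w0
  | i + 1 => metroF (fwdChain w0 v u i) (v (i + 1)) (u (i + 1))

/-- The forward-coupled tilde chain: it skips the first proposal, so
`W̃ 0 = w0`, `W̃ (i+1) = f (W̃ i) (v (i+2)) (u (i+2))`; it shares each pair `(v j, u j)`
with the main chain whenever it processes proposal `j`. -/
noncomputable def fwdChainT (w0 : ℝ) (v u : ℕ → ℝ) : ℕ → ℝ
  | 0 => w0
  | i + 1 => metroF (fwdChainT w0 v u i) (v (i + 2)) (u (i + 2))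

lemma metroF_le_max (w w' u : ℝ) : metroF w w' u ≤ max w w' := by
  unfold metroF
  split
  · exact le_max_right w w'
  · exact le_max_left w w'

lemma metroF_pos {w w' : ℝ} (hw : 0 < w) (hw' : 0 < w') (u : ℝ) : 0 < metroF w w' u := by
  unfold metroF
  split <;> assumption

lemma metroF_eq_of_le {w w' u : ℝ} (hw : 0 < w) (hww' : w ≤ w') (hu : u ≤ 1) :
    metroF w w' u = w' := by
  rw [metroF, if_pos]
  rwa [min_eq_left ((one_le_div hw).2 hww')]

section Chains

variable {v u : ℕ → ℝ}

lemma fwdChain_pos (hv : ∀ k, 0 < v k) : ∀ m, 0 < fwdChain (v 0) v u m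
  | 0 => hv 0
  | m + 1 => metroF_pos (fwdChain_pos hv m) (hv (m + 1)) _

lemma fwdChainT_pos (hv : ∀ k, 0 < v k) : ∀ m, 0 < fwdChainT (v 0) v u m
  | 0 => hv 0
  | m + 1 => metroF_pos (fwdChainT_pos hv m) (hv (m + 2)) _

lemma fwdChain_le {c : ℝ} : ∀ m, (∀ l ≤ m, v l ≤ c) → fwdChain (v 0) v u m ≤ c
  | 0, hc => hc 0 le_rfl
  | m + 1, hc => (metroF_le_max _ _ _).trans
      (max_le (fwdChain_le m fun l hl => hc l (by omega)) (hc (m + 1) le_rfl))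

lemma fwdChainT_le {c : ℝ} : ∀ m, (∀ l ≤ m + 1, v l ≤ c) → fwdChainT (v 0) v u m ≤ c
  | 0, hc => hc 0 (by omega)
  | m + 1, hc => (metroF_le_max _ _ _).trans
      (max_le (fwdChainT_le m fun l hl => hc l (by omega)) (hc (m + 2) le_rfl))

lemma fwdChain_succ_eq_fwdChainT_of_le {w0 : ℝ} {j : ℕ}
    (h : fwdChain w0 v u (j + 1) = fwdChainT w0 v u j) :
    ∀ m, j ≤ m → fwdChain w0 v u (m + 1) = fwdChainT w0 v u m := by
  intro m hjm
  induction m, hjm using Nat.le_induction with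
  | base => exact h
  | succ m _ ih => exact congrArg (metroF · (v (m + 2)) (u (m + 2))) ih

lemma fwdChain_succ_eq_fwdChainT_of_isRecord (hv : ∀ k, 0 < v k) (hu : ∀ k, u k ≤ 1) {j : ℕ}
    (hj : 2 ≤ j) (hrec : ∀ l ≤ j, v l ≤ v j) :
    ∀ m, j ≤ m + 1 → fwdChain (v 0) v u (m + 1) = fwdChainT (v 0) v u m := by
  obtain ⟨k, rfl⟩ : ∃ k, j = k + 2 := ⟨j - 2, by omega⟩
  have hW : fwdChain (v 0) v u (k + 2) = v (k + 2) :=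
    metroF_eq_of_le (fwdChain_pos hv _) (fwdChain_le _ fun l hl => hrec l (by omega)) (hu _)
  have hWT : fwdChainT (v 0) v u (k + 1) = v (k + 2) :=
    metroF_eq_of_le (fwdChainT_pos hv _) (fwdChainT_le _ fun l hl => hrec l (by omega)) (hu _)
  intro m hm
  exact fwdChain_succ_eq_fwdChainT_of_le (hW.trans hWT.symm) m (by omega)

end Chains

lemma lt_max_of_forall_exists_lt {x : ℕ → ℝ} {N : ℕ}
    (h : ∀ j, 2 ≤ j → j ≤ N → ∃ l ≤ j, x j < x l) :
    ∀ j, 2 ≤ j → j ≤ N → x j < max (x 0) (x 1) := by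
  intro j
  induction j using Nat.strong_induction_on with
  | _ j ih =>
    intro hj hjN
    obtain ⟨l, hlj, hxl⟩ := h j hj hjN
    have hlj : l < j := lt_of_le_of_ne hlj (by rintro rfl; exact lt_irrefl _ hxl)
    rcases lt_or_ge l 2 with hl | hl
    · interval_cases l
      · exact hxl.trans_le (le_max_left _ _)
      · exact hxl.trans_le (le_max_right _ _)
    · exact hxl.trans (ih l hlj hl (by omega))

section Dominance

variable {ι : Type*}

def dominanceSet (p : ι) (S : Set ι) : Set (ι → ℝ) :=
  {x | ∀ j ≠ p, (j ∈ S → x j ≤ x p) ∧ (j ∉ S → x j < x p)}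

lemma dominanceSet_mono (p : ι) {S S' : Set ι} (h : S ⊆ S') :
    dominanceSet p S ⊆ dominanceSet p S' := by
  intro x hx j hj
  obtain ⟨hle, hlt⟩ := hx j hj
  by_cases hjS : j ∈ S
  · exact ⟨fun _ => hle hjS, fun hjS' => absurd (h hjS) hjS'⟩
  · exact ⟨fun _ => (hlt hjS).le, fun _ => hlt hjS⟩

lemma measurableSet_dominanceSet [Countable ι] (p : ι) (S : Set ι) :
    MeasurableSet (dominanceSet p S) := by
  simp only [dominanceSet, Set.ofPred_forall, Set.ofPred_and]
  refine .iInter fun j => .iInter fun _ => .inter (.iInter fun _ => ?_) (.iInter fun _ => ?_)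
  · exact measurableSet_le (measurable_pi_apply j) (measurable_pi_apply p)
  · exact measurableSet_lt (measurable_pi_apply j) (measurable_pi_apply p)

lemma preimage_comp_perm_dominanceSet (σ : Equiv.Perm ι) (p : ι) (S : Set ι) :
    (fun x : ι → ℝ => x ∘ σ) ⁻¹' dominanceSet p S = dominanceSet (σ p) (σ '' S) := by
  ext x
  simp only [dominanceSet, Set.mem_preimage, Set.mem_ofPred_eq, Function.comp_apply,
    σ.image_eq_preimage_symm]
  refine ⟨fun h k hk => ?_, fun h j hj => ?_⟩
  · simpa using h (σ.symm k) (by rintro rfl; simp at hk)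
  · simpa using h (σ j) (σ.injective.ne hj)

lemma measurePreserving_comp_perm [Fintype ι] (ν : Measure ℝ) [SigmaFinite ν]
    (σ : Equiv.Perm ι) :
    MeasurePreserving (fun x : ι → ℝ => x ∘ σ)
      (Measure.pi fun _ => ν) (Measure.pi fun _ => ν) := by
  convert measurePreserving_arrowCongr' (fun _ => ν) (fun _ => ν) σ.symm
    (MeasurableEquiv.refl ℝ) (fun _ => MeasurePreserving.id ν)
  ext
  simp [MeasurableEquiv.arrowCongr', Equiv.arrowCongr', Equiv.arrowCongr]

end Dominance

section LastArgmax

variable {n : ℕ}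

def lastArgmaxSet (k : Fin n) : Set (Fin n → ℝ) := dominanceSet k {j | j < k}

lemma measurableSet_lastArgmaxSet (k : Fin n) : MeasurableSet (lastArgmaxSet k) :=
  measurableSet_dominanceSet _ _

lemma pairwise_disjoint_lastArgmaxSet :
    Pairwise (Function.onFun Disjoint (lastArgmaxSet (n := n))) := by
  suffices ∀ {k k' : Fin n}, k < k' → ∀ x ∈ lastArgmaxSet k, x ∉ lastArgmaxSet k' by
    intro k k' hne
    rw [Function.onFun, Set.disjoint_left]
    rcases hne.lt_or_gt with h | h
    · exact this h
    · exact fun x hk hk' => this h x hk' hk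
  intro k k' hkk' x hk hk'
  have hlt := (hk k' hkk'.ne').2 (by simpa using hkk'.le)
  have hle := (hk' k hkk'.ne).1 hkk'
  exact (hlt.trans_le hle).false

lemma measureReal_lastArgmaxSet_mono (ν : Measure ℝ) [IsFiniteMeasure ν] {a b : Fin n}
    (hab : a ≤ b) :
    (Measure.pi fun _ => ν).real (lastArgmaxSet a) ≤
      (Measure.pi fun _ => ν).real (lastArgmaxSet b) := by
  have hswap : Equiv.swap a b '' {j | j < a} ⊆ {j | j < b} := by
    rintro _ ⟨j, hj, rfl⟩
    rw [Equiv.swap_apply_of_ne_of_ne hj.ne (hj.trans_le hab).ne]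
    exact hj.trans_le hab
  calc (Measure.pi fun _ => ν).real (lastArgmaxSet a)
      = (Measure.pi fun _ => ν).real (dominanceSet b (Equiv.swap a b '' {j | j < a})) := by
        have h := preimage_comp_perm_dominanceSet (Equiv.swap a b) a {j | j < a}
        rw [Equiv.swap_apply_left] at h
        rw [← h, (measurePreserving_comp_perm ν _).measureReal_preimage
            (measurableSet_dominanceSet _ _).nullMeasurableSet, lastArgmaxSet]
    _ ≤ (Measure.pi fun _ => ν).real (lastArgmaxSet b) :=
        measureReal_mono (dominanceSet_mono b hswap)

end LastArgmax

lemma mul_add_le_two_mul_sum_of_monotone {m : ℕ} {p : Fin (m + 2) → ℝ} (hp : Monotone p) :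
    ((m : ℝ) + 2) * (p 0 + p 1) ≤ 2 * ∑ k, p k := by
  have htail : (m : ℝ) * p 1 ≤ ∑ j : Fin m, p j.succ.succ := by
    simpa using Finset.card_nsmul_le_sum Finset.univ (fun j : Fin m => p j.succ.succ) (p 1)
      fun j _ => hp (Fin.le_iff_val_le_val.2 (by simp))
  have h01 : p 0 ≤ p 1 := hp (Fin.zero_le 1)
  rw [Fin.sum_univ_succ, Fin.sum_univ_succ, Fin.succ_zero_eq_one]
  nlinarith [(Nat.cast_nonneg m : (0 : ℝ) ≤ m)]

lemma measureReal_lastArgmaxSet_zero_union_one_le (ν : Measure ℝ) [IsProbabilityMeasure ν]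
    (m : ℕ) :
    (Measure.pi fun _ : Fin (m + 2) => ν).real (lastArgmaxSet 0 ∪ lastArgmaxSet 1) ≤
      2 / ((m : ℝ) + 2) := by
  set π := Measure.pi fun _ : Fin (m + 2) => ν
  have hsum : ∑ k, π.real (lastArgmaxSet k) ≤ 1 := by
    simpa using sum_measureReal_le_measureReal_univ (μ := π) (s := Finset.univ)
      (t := lastArgmaxSet) (fun k _ => measurableSet_lastArgmaxSet k)
      (pairwise_disjoint_lastArgmaxSet.set_pairwise _)
  have hmono := mul_add_le_two_mul_sum_of_monotone (p := fun k => π.real (lastArgmaxSet k))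
    fun _ _ => measureReal_lastArgmaxSet_mono ν
  rw [le_div_iff₀ (by positivity)]
  nlinarith [measureReal_union_le (μ := π) (lastArgmaxSet 0) (lastArgmaxSet 1)]

lemma mem_lastArgmaxSet_zero_union_one {m : ℕ} {x : Fin (m + 2) → ℝ}
    (h : ∀ j : Fin (m + 2), 2 ≤ (j : ℕ) → x j < max (x 0) (x 1)) :
    x ∈ lastArgmaxSet 0 ∪ lastArgmaxSet 1 := by
  have hcases : ∀ j : Fin (m + 2), j = 0 ∨ j = 1 ∨ 2 ≤ (j : ℕ) := fun j => by
    rcases j with ⟨_ | _ | j, hj⟩ <;> simp [Fin.ext_iff]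
  rcases lt_or_ge (x 1) (x 0) with h10 | h01
  · refine Or.inl fun j hj => ⟨fun hj0 => absurd hj0 (Fin.not_lt_zero j), fun _ => ?_⟩
    rcases hcases j with rfl | rfl | hj2
    · exact absurd rfl hj
    · exact h10
    · exact (h j hj2).trans_eq (max_eq_left h10.le)
  · refine Or.inr fun j hj => ?_
    rcases hcases j with rfl | rfl | hj2
    · exact ⟨fun _ => h01, fun h0 => absurd Fin.zero_lt_one h0⟩
    · exact absurd rfl hj
    · have hlt := (h j hj2).trans_eq (max_eq_right h01)
      exact ⟨fun _ => hlt.le, fun _ => hlt⟩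

lemma fwdChain_succ_eq_fwdChainT_or_mem_lastArgmaxSet {v u : ℕ → ℝ} (hv : ∀ k, 0 < v k)
    (hu : ∀ k, u k ≤ 1) (m : ℕ) :
    fwdChain (v 0) v u (m + 1) = fwdChainT (v 0) v u m ∨
      (fun k : Fin (m + 2) => v k) ∈ lastArgmaxSet 0 ∪ lastArgmaxSet 1 := by
  by_cases hrec : ∃ j, 2 ≤ j ∧ j ≤ m + 1 ∧ ∀ l ≤ j, v l ≤ v j
  · obtain ⟨j, hj, hjm, hrec⟩ := hrec
    exact Or.inl (fwdChain_succ_eq_fwdChainT_of_isRecord hv hu hj hrec m hjm)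
  · push Not at hrec
    have hmax := lt_max_of_forall_exists_lt fun j hj hjm => hrec j hj hjm
    exact Or.inr (mem_lastArgmaxSet_zero_union_one fun j hj => hmax j hj (by omega))

theorem fwd_coupling_probability_general
    {Ω : Type*} [MeasurableSpace Ω] (μ : Measure Ω) [IsProbabilityMeasure μ]
    (i : ℕ) (hi : 2 ≤ i) (v u : ℕ → Ω → ℝ)
    (hvmeas : ∀ k, Measurable (v k))
    (hvpos : ∀ k ω, 0 < v k ω) (hu : ∀ k ω, u k ω ∈ Set.Icc (0 : ℝ) 1)
    (hindep : ProbabilityTheory.iIndepFun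
      (fun k : Fin (i + 1) => v k) μ)
    (hident : ∀ k : ℕ, k ≤ i → ProbabilityTheory.IdentDistrib (v k) (v 0) μ μ) :
    1 - 2 / ((i : ℝ) + 1) ≤
      (μ {ω | fwdChain (v 0 ω) (fun k => v k ω) (fun k => u k ω) i
            = fwdChainT (v 0 ω) (fun k => v k ω) (fun k => u k ω) (i - 1)}).toReal := by
  obtain ⟨m, rfl⟩ : ∃ m, i = m + 1 := ⟨i - 1, by omega⟩
  set X : Ω → Fin (m + 2) → ℝ := fun ω k => v k ω
  have hX : Measurable X := measurable_pi_lambda _ fun k => hvmeas k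
  have hlaw : μ.map X = Measure.pi fun _ => μ.map (v 0) := by
    rw [hindep.map_fun_eq_pi_map (f := fun k : Fin (m + 2) => v k)
      fun k => (hvmeas k).aemeasurable]
    exact congrArg Measure.pi (funext fun k => (hident k (by omega)).map_eq)
  set S := {ω | fwdChain (v 0 ω) (fun k => v k ω) (fun k => u k ω) (m + 1)
    = fwdChainT (v 0 ω) (fun k => v k ω) (fun k => u k ω) (m + 1 - 1)}
  have hbad : Sᶜ ⊆ X ⁻¹' (lastArgmaxSet 0 ∪ lastArgmaxSet 1) := fun ω hω =>
    (fwdChain_succ_eq_fwdChainT_or_mem_lastArgmaxSet (hvpos · ω) (fun k => (hu k ω).2)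
      m).resolve_left hω
  have : IsProbabilityMeasure (μ.map (v 0)) :=
    Measure.isProbabilityMeasure_map (hvmeas 0).aemeasurable
  have hbad_le : μ.real Sᶜ ≤ 2 / ((m : ℝ) + 2) :=
    calc μ.real Sᶜ ≤ μ.real (X ⁻¹' (lastArgmaxSet 0 ∪ lastArgmaxSet 1)) :=
        measureReal_mono hbad
      _ = (μ.map X).real (lastArgmaxSet 0 ∪ lastArgmaxSet 1) :=
        (map_measureReal_apply hX
          ((measurableSet_lastArgmaxSet 0).union (measurableSet_lastArgmaxSet 1))).symm
      _ ≤ 2 / ((m : ℝ) + 2) := hlaw ▸ measureReal_lastArgmaxSet_zero_union_one_le _ m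
  have hsplit := measureReal_union_le (μ := μ) S Sᶜ
  rw [Set.union_compl_self, probReal_univ] at hsplit
  change _ ≤ μ.real S
  rw [Nat.cast_succ, add_assoc, one_add_one_eq_two]
  linarith

/-- **Forward coupling probability bound (Lemma 2).** If `w0 = v 0, v 1, …, v i` are
i.i.d. positive random weights and `u 1, …, u i` are arbitrary `[0,1]`-valued random
variables, then the forward-coupled chains have coupled by step `i ≥ 2` with probability
at least `1 - 2/(i+1)`. -/
theorem fwd_coupling_probability
    {Ω : Type*} [MeasurableSpace Ω] (μ : Measure Ω) [IsProbabilityMeasure μ]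
    (i : ℕ) (hi : 2 ≤ i) (v u : ℕ → Ω → ℝ)
    (hvmeas : ∀ k, Measurable (v k)) (humeas : ∀ k, Measurable (u k))
    (hvpos : ∀ k ω, 0 < v k ω) (hu : ∀ k ω, u k ω ∈ Set.Icc (0 : ℝ) 1)
    (hindep : ProbabilityTheory.iIndepFun
      (fun k : Fin (i + 1) => v k) μ)
    (hident : ∀ k : ℕ, k ≤ i → ProbabilityTheory.IdentDistrib (v k) (v 0) μ μ) :
    1 - 2 / ((i : ℝ) + 1) ≤
      (μ {ω | fwdChain (v 0 ω) (fun k => v k ω) (fun k => u k ω) i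
            = fwdChainT (v 0 ω) (fun k => v k ω) (fun k => u k ω) (i - 1)}).toReal :=
  fwd_coupling_probability_general μ i hi v u hvmeas hvpos hu hindep hident
end

section
/- Let w₀, v₁, v₂, … be i.i.d. random variables taking values in a finite set 𝒲 of positive reals, with every element of 𝒲 attained with positive probability; write w_max = max 𝒲, w_min = min 𝒲, and q = P(v₁ = w_max) > 0. Let u₁, u₂, … be arbitrary random variables with values in [0,1], and define the forward-coupled Metropolis weight chains W and W̃ from them. Then for every i ≥ 2, E[|1/W_i − 1/W̃_{i−1}|] ≤ (1 − q)^{i−1} · (1/w_min − 1/w_max), and consequently Σ_{i=1}^∞ E[|1/W_i − 1/W̃_{i−1}|] < ∞. -/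
/-!
Both chains hold weights in `W`. When the proposal `max W` arrives at a time `j ≥ 2`, both chains
accept it, so `W_j = W̃_{j-1}`, and from then on they process the same proposals and never separate.
Before that the difference of reciprocals is at most `1 / min W - 1 / max W`. By independence, no
proposal `v_2, …, v_i` equals `max W` with probability `(1 - q)^(i-1)`, a summable sequence.
-/

open MeasureTheory

open ProbabilityTheory

lemma metroF_mem {s : Set ℝ} {w w' x : ℝ} (hw : w ∈ s) (hw' : w' ∈ s) : metroF w w' x ∈ s := by
  unfold metroF; split <;> assumption

lemma fwdChain_mem {s : Set ℝ} {w0 : ℝ} {v u : ℕ → ℝ} (h0 : w0 ∈ s) (hv : ∀ k, v k ∈ s) :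
    ∀ i, fwdChain w0 v u i ∈ s
  | 0 => h0
  | i + 1 => metroF_mem (fwdChain_mem h0 hv i) (hv (i + 1))

lemma fwdChainT_mem {s : Set ℝ} {w0 : ℝ} {v u : ℕ → ℝ} (h0 : w0 ∈ s) (hv : ∀ k, v k ∈ s) :
    ∀ i, fwdChainT w0 v u i ∈ s
  | 0 => h0
  | i + 1 => metroF_mem (fwdChainT_mem h0 hv i) (hv (i + 2))

lemma metroF_of_le {w w' x : ℝ} (hw : 0 < w) (hle : w ≤ w') (hx : x ≤ 1) : metroF w w' x = w' :=
  if_pos (le_min hx (hx.trans ((one_le_div hw).mpr hle)))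

lemma fwdChain_add_two_eq_fwdChainT_add_one_of_le {w0 : ℝ} {v u : ℕ → ℝ} {j m : ℕ}
    (hj : fwdChain w0 v u (j + 2) = fwdChainT w0 v u (j + 1)) (hm : j ≤ m) :
    fwdChain w0 v u (m + 2) = fwdChainT w0 v u (m + 1) := by
  induction m, hm using Nat.le_induction with
  | base => exact hj
  | succ m _ ih => exact congrArg (metroF · (v (m + 3)) (u (m + 3))) ih

lemma fwdChain_add_two_eq_fwdChainT_add_one_of_upperBound {s : Set ℝ} (hs : ∀ x ∈ s, 0 < x)
    {w0 : ℝ} {v u : ℕ → ℝ} (h0 : w0 ∈ s) (hv : ∀ k, v k ∈ s) (hu : ∀ k, u k ≤ 1) {j m : ℕ}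
    (hj : v (j + 2) ∈ upperBounds s) (hm : j ≤ m) :
    fwdChain w0 v u (m + 2) = fwdChainT w0 v u (m + 1) := by
  refine fwdChain_add_two_eq_fwdChainT_add_one_of_le ?_ hm
  have hW := fwdChain_mem (u := u) h0 hv (j + 1)
  have hWT := fwdChainT_mem (u := u) h0 hv j
  exact (metroF_of_le (hs _ hW) (hj hW) (hu _)).trans
    (metroF_of_le (hs _ hWT) (hj hWT) (hu _)).symm

lemma one_div_mem_Icc_of_mem {W : Finset ℝ} (hWne : W.Nonempty) (hWpos : ∀ x ∈ W, 0 < x)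
    {x : ℝ} (hx : x ∈ W) : 1 / x ∈ Set.Icc (1 / W.max' hWne) (1 / W.min' hWne) :=
  ⟨one_div_le_one_div_of_le (hWpos x hx) (W.le_max' x hx),
    one_div_le_one_div_of_le (hWpos _ (W.min'_mem hWne)) (W.min'_le x hx)⟩

lemma abs_one_div_fwdChain_sub_one_div_fwdChainT_le {W : Finset ℝ} (hWne : W.Nonempty)
    (hWpos : ∀ x ∈ W, 0 < x) {w0 : ℝ} {v u : ℕ → ℝ} (h0 : w0 ∈ W) (hv : ∀ k, v k ∈ W) (i j : ℕ) :
    |1 / fwdChain w0 v u i - 1 / fwdChainT w0 v u j| ≤ 1 / W.min' hWne - 1 / W.max' hWne :=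
  Real.dist_le_of_mem_Icc
    (one_div_mem_Icc_of_mem hWne hWpos (fwdChain_mem (s := W) h0 hv i))
    (one_div_mem_Icc_of_mem hWne hWpos (fwdChainT_mem (s := W) h0 hv j))

lemma ProbabilityTheory.iIndepFun.measureReal_biInter_preimage_eq_pow {Ω ι β : Type*}
    [MeasurableSpace Ω] [MeasurableSpace β] {μ : Measure Ω} {v : ι → Ω → β}
    (hindep : iIndepFun v μ) {i₀ : ι} (hident : ∀ i, IdentDistrib (v i) (v i₀) μ μ)
    (S : Finset ι) {A : Set β} (hA : MeasurableSet A) :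
    μ.real (⋂ i ∈ S, v i ⁻¹' A) = μ.real (v i₀ ⁻¹' A) ^ S.card := by
  simp only [measureReal_def, hindep.measure_inter_preimage_eq_mul S (fun _ _ => hA),
    (hident _).measure_mem_eq hA, Finset.prod_const, ENNReal.toReal_pow]

lemma integral_abs_one_div_fwdChain_sub_le {Ω : Type*} [MeasurableSpace Ω] (μ : Measure Ω)
    [IsProbabilityMeasure μ] {W : Finset ℝ} (hWne : W.Nonempty) (hWpos : ∀ x ∈ W, 0 < x)
    {v u : ℕ → Ω → ℝ} (hvmeas : ∀ k, Measurable (v k)) (hvW : ∀ k ω, v k ω ∈ W)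
    (hu : ∀ k ω, u k ω ≤ 1) (hindep : iIndepFun v μ)
    (hident : ∀ k, IdentDistrib (v k) (v 0) μ μ) (m : ℕ) :
    ∫ ω, |1 / fwdChain (v 0 ω) (fun k => v k ω) (fun k => u k ω) (m + 2)
        - 1 / fwdChainT (v 0 ω) (fun k => v k ω) (fun k => u k ω) (m + 1)| ∂μ
      ≤ (1 - μ.real (v 0 ⁻¹' {W.max' hWne})) ^ (m + 1)
          * (1 / W.min' hWne - 1 / W.max' hWne) := by
  set C := 1 / W.min' hWne - 1 / W.max' hWne
  set uncoupled := ⋂ j ∈ Finset.Icc 2 (m + 2), v j ⁻¹' {W.max' hWne}ᶜ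
  have huncoupled : MeasurableSet uncoupled :=
    .biInter (Set.to_countable _) fun j _ => hvmeas j (measurableSet_singleton _).compl
  have hpointwise : ∀ ω,
      |1 / fwdChain (v 0 ω) (fun k => v k ω) (fun k => u k ω) (m + 2)
        - 1 / fwdChainT (v 0 ω) (fun k => v k ω) (fun k => u k ω) (m + 1)|
      ≤ uncoupled.indicator (fun _ => C) ω := by
    intro ω
    by_cases hω : ω ∈ uncoupled
    · rw [Set.indicator_of_mem hω]
      exact abs_one_div_fwdChain_sub_one_div_fwdChainT_le hWne hWpos (hvW 0 ω) (hvW · ω) _ _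
    · obtain ⟨j, hj, hjmax⟩ : ∃ j ∈ Finset.Icc 2 (m + 2), v j ω = W.max' hWne := by
        simpa [uncoupled, and_assoc] using hω
      obtain ⟨k, rfl⟩ : ∃ k, j = k + 2 := ⟨j - 2, by grind⟩
      have hupper : v (k + 2) ω ∈ upperBounds (W : Set ℝ) := hjmax ▸ fun x hx => W.le_max' x hx
      rw [Set.indicator_of_notMem hω, fwdChain_add_two_eq_fwdChainT_add_one_of_upperBound
        hWpos (hvW 0 ω) (hvW · ω) (hu · ω) hupper (by grind), sub_self, abs_zero]
  calc _ ≤ ∫ ω, uncoupled.indicator (fun _ => C) ω ∂μ :=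
        integral_mono_of_nonneg (ae_of_all _ fun _ => abs_nonneg _)
          ((integrable_const C).indicator huncoupled) (ae_of_all _ hpointwise)
    _ = μ.real uncoupled * C := integral_indicator_const C huncoupled
    _ = _ := by
      rw [hindep.measureReal_biInter_preimage_eq_pow hident _
        (measurableSet_singleton _).compl, Nat.card_Icc, Set.preimage_compl,
        probReal_compl_eq_one_sub (hvmeas 0 (measurableSet_singleton _))]
      congr 2

theorem fce_finite_state_summable_general
    {Ω : Type*} [MeasurableSpace Ω] (μ : Measure Ω) [IsProbabilityMeasure μ]
    (W : Finset ℝ) (hWne : W.Nonempty) (hWpos : ∀ x ∈ W, 0 < x)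
    (v u : ℕ → Ω → ℝ)
    (hvmeas : ∀ k, Measurable (v k))
    (hvW : ∀ k ω, v k ω ∈ W) (hu : ∀ k ω, u k ω ∈ Set.Icc (0 : ℝ) 1)
    (hindep : ProbabilityTheory.iIndepFun v μ)
    (hident : ∀ k, ProbabilityTheory.IdentDistrib (v k) (v 0) μ μ)
    (hatom : ∀ x ∈ W, 0 < μ {ω | v 0 ω = x}) :
    (∀ i : ℕ, 2 ≤ i →
      ∫ ω, |1 / fwdChain (v 0 ω) (fun k => v k ω) (fun k => u k ω) i
        - 1 / fwdChainT (v 0 ω) (fun k => v k ω) (fun k => u k ω) (i - 1)| ∂μ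
      ≤ (1 - (μ {ω | v 1 ω = W.max' hWne}).toReal) ^ (i - 1)
          * (1 / W.min' hWne - 1 / W.max' hWne)) ∧
    Summable (fun i : ℕ =>
      ∫ ω, |1 / fwdChain (v 0 ω) (fun k => v k ω) (fun k => u k ω) (i + 1)
        - 1 / fwdChainT (v 0 ω) (fun k => v k ω) (fun k => u k ω) i| ∂μ) := by
  have hbound := integral_abs_one_div_fwdChain_sub_le μ hWne hWpos hvmeas hvW
    (fun k ω => (hu k ω).2) hindep hident
  have hq : (μ {ω | v 1 ω = W.max' hWne}).toReal = μ.real (v 0 ⁻¹' {W.max' hWne}) :=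
    congrArg ENNReal.toReal ((hident 1).measure_mem_eq (measurableSet_singleton _))
  refine ⟨fun i hi => ?_, ?_⟩
  · obtain ⟨m, rfl⟩ : ∃ m, i = m + 2 := ⟨i - 2, by omega⟩
    simpa [hq] using hbound m
  · have hq_pos : 0 < μ.real (v 0 ⁻¹' {W.max' hWne}) :=
      ENNReal.toReal_pos (hatom _ (W.max'_mem hWne)).ne' (measure_ne_top _ _)
    have hgeom := (summable_nat_add_iff 1).2 <| summable_geometric_of_lt_one
      (sub_nonneg.2 measureReal_le_one) (sub_lt_self 1 hq_pos)
    exact (summable_nat_add_iff 1).1 <| (hgeom.mul_right _).of_nonneg_of_le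
      (fun _ => integral_nonneg fun _ => abs_nonneg _) hbound

/-- **Geometric decay of coupling errors on a finite weight set.** If the i.i.d. weights
`w0 = v 0, v 1, v 2, …` take values in a finite set `W` of positive reals with every
element attained with positive probability, and `q = P(v 1 = max W)`, then for all
`i ≥ 2`, `E[|1/W i - 1/W̃ (i-1)|] ≤ (1-q)^(i-1) * (1/min W - 1/max W)`, and the series
`∑_{i≥1} E[|1/W i - 1/W̃ (i-1)|]` converges. -/
theorem fce_finite_state_summable
    {Ω : Type*} [MeasurableSpace Ω] (μ : Measure Ω) [IsProbabilityMeasure μ]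
    (W : Finset ℝ) (hWne : W.Nonempty) (hWpos : ∀ x ∈ W, 0 < x)
    (v u : ℕ → Ω → ℝ)
    (hvmeas : ∀ k, Measurable (v k)) (humeas : ∀ k, Measurable (u k))
    (hvW : ∀ k ω, v k ω ∈ W) (hu : ∀ k ω, u k ω ∈ Set.Icc (0 : ℝ) 1)
    (hindep : ProbabilityTheory.iIndepFun v μ)
    (hident : ∀ k, ProbabilityTheory.IdentDistrib (v k) (v 0) μ μ)
    (hatom : ∀ x ∈ W, 0 < μ {ω | v 0 ω = x}) :
    (∀ i : ℕ, 2 ≤ i →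
      ∫ ω, |1 / fwdChain (v 0 ω) (fun k => v k ω) (fun k => u k ω) i
        - 1 / fwdChainT (v 0 ω) (fun k => v k ω) (fun k => u k ω) (i - 1)| ∂μ
      ≤ (1 - (μ {ω | v 1 ω = W.max' hWne}).toReal) ^ (i - 1)
          * (1 / W.min' hWne - 1 / W.max' hWne)) ∧
    Summable (fun i : ℕ =>
      ∫ ω, |1 / fwdChain (v 0 ω) (fun k => v k ω) (fun k => u k ω) (i + 1)
        - 1 / fwdChainT (v 0 ω) (fun k => v k ω) (fun k => u k ω) i| ∂μ) :=
  fce_finite_state_summable_general μ W hWne hWpos v u hvmeas hvW hu hindep hident hatom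
end
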